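/- arXiv:1510.07710 — 3 statements merged into one kernel-verified Lean document; each statement's English description precedes it below -/
import Mathlib

section
/- Let G be a group and H ≤ G a subgroup. Suppose that for every g ∈ G and every finite subset F ⊆ G there exists at least one n ≥ 1 such that H ∩ F = gⁿHg⁻ⁿ ∩ F. Then for every g ∈ G and every finite subset F ⊆ G there exist infinitely many n ∈ ℕ such that H ∩ F = gⁿHg⁻ⁿ ∩ F; that is, H is recurrent. -/
/-- The conjugate `gHg⁻¹` of a subgroup `H ≤ G` by an element `g ∈ G`. -/
def conjSubgroup {G : Type*} [Group G] (g : G) (H : Subgroup G) : Subgroup G :=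
  Subgroup.map (MulAut.conj g).toMonoidHom H

lemma mem_conjSubgroup {G : Type*} [Group G] {a x : G} {H : Subgroup G} :
    x ∈ conjSubgroup a H ↔ a⁻¹ * x * a ∈ H := by
  simp only [conjSubgroup, Subgroup.mem_map, MulEquiv.coe_toMonoidHom, MulAut.conj_apply]
  constructor
  · rintro ⟨y, hy, rfl⟩
    simpa [mul_assoc] using hy
  · intro hx
    exact ⟨_, hx, by group⟩

/-- If for every `g ∈ G` and every finite `F ⊆ G` there is at least one `n ≥ 1`
with `H ∩ F = gⁿHg⁻ⁿ ∩ F`, then for every `g ∈ G` and every finite `F ⊆ G`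
there are infinitely many `n ∈ ℕ` with `H ∩ F = gⁿHg⁻ⁿ ∩ F`; that is, `H` is
recurrent. -/
theorem recurrent_of_exists_one (G : Type*) [Group G] (H : Subgroup G)
    (h : ∀ g : G, ∀ F : Set G, F.Finite → ∃ n : ℕ, 1 ≤ n ∧
      (H : Set G) ∩ F = (conjSubgroup (g ^ n) H : Set G) ∩ F) :
    ∀ g : G, ∀ F : Set G, F.Finite →
      {n : ℕ | (H : Set G) ∩ F = (conjSubgroup (g ^ n) H : Set G) ∩ F}.Infinite := by
  intro g F hF
  set S := {n : ℕ | (H : Set G) ∩ F = (conjSubgroup (g ^ n) H : Set G) ∩ F} with hS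
  have h0 : (0 : ℕ) ∈ S := by
    show (H : Set G) ∩ F = (conjSubgroup (g ^ 0) H : Set G) ∩ F
    ext x
    simp [mem_conjSubgroup]
  have hstep : ∀ n ∈ S, ∃ m, 1 ≤ m ∧ n + m ∈ S := by
    intro n hn
    have hn' : (H : Set G) ∩ F = (conjSubgroup (g ^ n) H : Set G) ∩ F := hn
    set F' : Set G := (fun x => (g ^ n)⁻¹ * x * g ^ n) '' F with hF'
    obtain ⟨m, hm1, hm⟩ := h g F' (hF.image _)
    refine ⟨m, hm1, ?_⟩
    show (H : Set G) ∩ F = (conjSubgroup (g ^ (n + m)) H : Set G) ∩ F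
    ext x
    simp only [Set.mem_inter_iff, SetLike.mem_coe]
    constructor
    · rintro ⟨hxH, hxF⟩
      refine ⟨?_, hxF⟩
      have h1 : (g ^ n)⁻¹ * x * g ^ n ∈ H :=
        mem_conjSubgroup.mp (SetLike.mem_coe.mp (hn'.le ⟨SetLike.mem_coe.mpr hxH, hxF⟩).1)
      have h2 : (g ^ n)⁻¹ * x * g ^ n ∈ F' := ⟨x, hxF, rfl⟩
      have h3 : (g ^ m)⁻¹ * ((g ^ n)⁻¹ * x * g ^ n) * g ^ m ∈ H :=
        mem_conjSubgroup.mp (SetLike.mem_coe.mp (hm.le ⟨SetLike.mem_coe.mpr h1, h2⟩).1)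
      rw [mem_conjSubgroup]
      have heq : (g ^ (n + m))⁻¹ * x * g ^ (n + m)
          = (g ^ m)⁻¹ * ((g ^ n)⁻¹ * x * g ^ n) * g ^ m := by
        rw [pow_add]; group
      rw [heq]; exact h3
    · rintro ⟨hxC, hxF⟩
      refine ⟨?_, hxF⟩
      rw [mem_conjSubgroup] at hxC
      have h3 : (g ^ m)⁻¹ * ((g ^ n)⁻¹ * x * g ^ n) * g ^ m ∈ H := by
        have heq : (g ^ m)⁻¹ * ((g ^ n)⁻¹ * x * g ^ n) * g ^ m
            = (g ^ (n + m))⁻¹ * x * g ^ (n + m) := by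
          rw [pow_add]; group
        rw [heq]; exact hxC
      have h2 : (g ^ n)⁻¹ * x * g ^ n ∈ F' := ⟨x, hxF, rfl⟩
      have h1 : (g ^ n)⁻¹ * x * g ^ n ∈ H :=
        SetLike.mem_coe.mp
          (hm.ge ⟨SetLike.mem_coe.mpr (mem_conjSubgroup.mpr h3), h2⟩).1
      exact SetLike.mem_coe.mp
        (hn'.ge ⟨SetLike.mem_coe.mpr (mem_conjSubgroup.mpr h1), hxF⟩).1
  have key : ∀ b : ℕ, ∃ n ∈ S, b < n := by
    intro b
    induction b with
    | zero =>
      obtain ⟨m, hm1, hm⟩ := hstep 0 h0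
      exact ⟨0 + m, hm, by omega⟩
    | succ b ih =>
      obtain ⟨n, hn, hbn⟩ := ih
      obtain ⟨m, hm1, hm⟩ := hstep n hn
      exact ⟨n + m, hm, by omega⟩
  apply Set.infinite_of_not_bddAbove
  rintro ⟨b, hb⟩
  obtain ⟨n, hn, hbn⟩ := key b
  exact absurd (hb hn) (by omega)
end

section
/- Let a group G act by isometries on a metric space (S, d), let s ∈ S, let h, g ∈ G, and suppose there is a constant C ≥ 0 such that (hgⁿs, gⁿs)_s ≤ C for all n ∈ ℕ. Then for all n ∈ ℕ, (g⁻ⁿhgⁿs, g⁻ⁿs)_s ≥ d(s, gⁿs) − d(hs, s) − C. -/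
/-- The Gromov product `(x, y)_z = (d(x,z) + d(y,z) − d(x,y)) / 2` of two points
`x, y` of a metric space with respect to a base point `z`. -/
noncomputable def gromovProd {S : Type*} [MetricSpace S] (x y z : S) : ℝ :=
  (dist x z + dist y z - dist x y) / 2

/-- Let `G` act by isometries on a metric space `S`, let `s ∈ S`, `h, g ∈ G`,
and suppose `(h gⁿ s, gⁿ s)_s ≤ C` for all `n ∈ ℕ` and some `C ≥ 0`. Then
`(g⁻ⁿ h gⁿ s, g⁻ⁿ s)_s ≥ d(s, gⁿ s) − d(h s, s) − C` for all `n ∈ ℕ`. -/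
theorem gromovProd_conj_estimate {G S : Type*} [Group G] [MetricSpace S]
    [MulAction G S]
    (hiso : ∀ g : G, Isometry (fun x : S => g • x))
    (s : S) (h g : G) (C : ℝ) (hC : 0 ≤ C)
    (hyp : ∀ n : ℕ, gromovProd ((h * g ^ n) • s) (g ^ n • s) s ≤ C) :
    ∀ n : ℕ,
      dist s (g ^ n • s) - dist (h • s) s - C ≤
        gromovProd (((g ^ n)⁻¹ * h * g ^ n) • s) ((g ^ n)⁻¹ • s) s := by
  intro n
  have hd : ∀ x y : S, dist (g ^ n • x) (g ^ n • y) = dist x y := (hiso (g ^ n)).dist_eq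
  have e1 : dist (((g ^ n)⁻¹ * h * g ^ n) • s) s = dist ((h * g ^ n) • s) (g ^ n • s) := by
    rw [← hd (((g ^ n)⁻¹ * h * g ^ n) • s) s, ← mul_smul]
    congr 2
    group
  have e2 : dist ((g ^ n)⁻¹ • s) s = dist s (g ^ n • s) := by
    rw [← hd ((g ^ n)⁻¹ • s) s, smul_inv_smul]
  have e3 : dist (((g ^ n)⁻¹ * h * g ^ n) • s) ((g ^ n)⁻¹ • s)
      = dist ((h * g ^ n) • s) s := by
    rw [← hd (((g ^ n)⁻¹ * h * g ^ n) • s) ((g ^ n)⁻¹ • s), smul_inv_smul, ← mul_smul]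
    congr 2
    group
  have h1 := hyp n
  have h2 := dist_nonneg (x := h • s) (y := s)
  have h3 := dist_comm (g ^ n • s) s
  unfold gromovProd at h1 ⊢
  rw [e1, e2, e3]
  linarith
end

section
/- Let a group G act by isometries on a δ-hyperbolic metric space (S, d), let g ∈ G be loxodromic, let s ∈ S, and let f ∈ G be such that for some constant C ≥ 0 one has (fgⁿs, gⁿs)_s ≤ C and (fg⁻ⁿs, g⁻ⁿs)_s ≤ C for all n ∈ ℕ (this holds precisely when f does not fix either of the two limit points g⁺, g⁻ of g). Then there exists N ∈ ℕ such that for all n ≥ N, the commutator [f, gⁿ] = fgⁿf⁻¹g⁻ⁿ is loxodromic. -/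
/-- An element `g` of a group `G` acting on a metric space `S` is loxodromic if
for every point `s ∈ S` the orbit map `ℤ → S`, `n ↦ gⁿ • s`, is a
quasi-isometric embedding: there are `λ ≥ 1` and `c ≥ 0` with
`λ⁻¹ |m − n| − c ≤ d(gᵐ s, gⁿ s) ≤ λ |m − n| + c` for all `m, n ∈ ℤ`. -/
def Loxodromic {G : Type*} (S : Type*) [Group G] [MetricSpace S] [MulAction G S]
    (g : G) : Prop :=
  ∀ s : S, ∃ lam c : ℝ, 1 ≤ lam ∧ 0 ≤ c ∧
    ∀ m n : ℤ,
      lam⁻¹ * |(m : ℝ) - (n : ℝ)| - c ≤ dist (g ^ m • s) (g ^ n • s) ∧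
        dist (g ^ m • s) (g ^ n • s) ≤ lam * |(m : ℝ) - (n : ℝ)| + c

section aux

variable {G S : Type*} [Group G] [MetricSpace S] [MulAction G S]

lemma dist_smul_eq (hiso : ∀ g : G, Isometry (fun x : S => g • x)) (a : G) (x y : S) :
    dist (a • x) (a • y) = dist x y := by
  simpa using (hiso a).dist_eq x y

lemma gp_smul (hiso : ∀ g : G, Isometry (fun x : S => g • x)) (a : G) (x y z : S) :
    gromovProd (a • x) (a • y) (a • z) = gromovProd x y z := by
  simp only [gromovProd, dist_smul_eq hiso]

lemma gp_comm (x y z : S) : gromovProd x y z = gromovProd y x z := by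
  simp only [gromovProd]; rw [dist_comm x y]; ring

lemma gp_nonneg (x y z : S) : 0 ≤ gromovProd x y z := by
  have h := dist_triangle x z y
  rw [dist_comm z y] at h
  simp only [gromovProd]; linarith

lemma gp_le_dist (x y z : S) : gromovProd x y z ≤ dist x z := by
  have h := dist_triangle y x z
  rw [dist_comm y x] at h
  simp only [gromovProd]; linarith

lemma gp_base (x y z z' : S) : gromovProd x y z ≤ gromovProd x y z' + dist z' z := by
  have h1 := dist_triangle x z' z
  have h2 := dist_triangle y z' z
  simp only [gromovProd]; linarith

lemma gp_add (x y z : S) : gromovProd x y z + gromovProd x z y = dist y z := by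
  simp only [gromovProd]; rw [dist_comm z y]; ring

lemma dist_eq_gp (x y z : S) :
    dist x y = dist x z + dist y z - 2 * gromovProd x y z := by
  simp only [gromovProd]; ring

end aux

section chain
variable {G S : Type*} [Group G] [MetricSpace S] [MulAction G S]

lemma chain_lemma (hiso : ∀ g : G, Isometry (fun x : S => g • x))
    {δ : ℝ} (hδ : 0 ≤ δ)
    (hhyp : ∀ x y z t : S,
      min (gromovProd x y t) (gromovProd y z t) - δ ≤ gromovProd x z t)
    (h : G) (s : S) (K : ℝ) (hK0 : 0 ≤ K)
    (hK : gromovProd (h⁻¹ • s) (h • s) s ≤ K)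
    (hbig : 2*K + 2*δ + 1 ≤ dist s (h • s)) :
    ∀ k : ℕ, gromovProd s (h^(k+1) • s) (h^k • s) ≤ K + δ ∧
      (k : ℝ) ≤ dist s (h^k • s) := by
  have hstep : ∀ j : ℕ, dist (h^j • s) (h^(j+1) • s) = dist s (h • s) := by
    intro j
    have e : h^(j+1) • s = h^j • (h • s) := by rw [pow_succ, mul_smul]
    rw [e]; exact dist_smul_eq hiso _ _ _
  intro k
  induction k with
  | zero =>
      constructor
      · have e : gromovProd s (h^(0+1) • s) (h^0 • s) = 0 := by
          simp [gromovProd, dist_comm]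
        rw [e]; linarith
      · simp
  | succ k ih =>
      obtain ⟨ihσ, ihD⟩ := ih
      have hks : dist (h^(k+1) • s) (h^k • s) = dist s (h • s) := by
        rw [dist_comm]; exact hstep k
      have hDeq := dist_eq_gp s (h^(k+1) • s) (h^k • s)
      have hD : ((k:ℝ)+1) ≤ dist s (h^(k+1) • s) := by
        rw [hDeq, hks]; linarith
      constructor
      · -- bound the new Gromov product
        have e1 : (h:G)^(k+1) • (h⁻¹ • s) = h^k • s := by
          rw [smul_smul, pow_succ, mul_assoc, mul_inv_cancel, mul_one]
        have e2 : (h:G)^(k+1) • (h • s) = h^(k+2) • s := by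
          rw [smul_smul, ← pow_succ]
        have hmid : gromovProd (h^k • s) (h^(k+2) • s) (h^(k+1) • s) ≤ K := by
          have e := gp_smul hiso (h^(k+1)) (h⁻¹ • s) (h • s) s
          rw [e1, e2] at e
          rw [e]; exact hK
        have hadd := gp_add s (h^(k+1) • s) (h^k • s)
        have hA : K + δ < gromovProd (h^k • s) s (h^(k+1) • s) := by
          rw [gp_comm (h^k • s) s (h^(k+1) • s)]
          rw [hks] at hadd
          linarith
        have hmin := hhyp (h^k • s) s (h^(k+2) • s) (h^(k+1) • s)
        have hmin2 : min (gromovProd (h^k • s) s (h^(k+1) • s))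
            (gromovProd s (h^(k+2) • s) (h^(k+1) • s)) ≤ K + δ := by linarith
        rcases min_le_iff.mp hmin2 with h' | h'
        · exact absurd h' (not_le.2 hA)
        · exact h'
      · push_cast; exact hD

lemma dist_pow_le (hiso : ∀ g : G, Isometry (fun x : S => g • x)) (h : G) (t : S) :
    ∀ k : ℕ, dist (h^k • t) t ≤ (k : ℝ) * dist (h • t) t := by
  intro k
  induction k with
  | zero => simp
  | succ k ih =>
      have e : dist (h^(k+1) • t) (h • t) = dist (h^k • t) t := by
        have e2 : h^(k+1) • t = h • (h^k • t) := by rw [pow_succ', mul_smul]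
        rw [e2]; exact dist_smul_eq hiso _ _ _
      have tri := dist_triangle (h^(k+1) • t) (h • t) t
      rw [e] at tri
      push_cast
      nlinarith [dist_nonneg (x := h • t) (y := t)]

lemma dist_zpow_reduce (hiso : ∀ g : G, Isometry (fun x : S => g • x))
    (h : G) (t : S) (m n : ℤ) :
    dist (h^m • t) (h^n • t) = dist (h^((m-n).natAbs) • t) t := by
  have key : ∀ p : ℤ, dist (h^p • t) t = dist (h^(p.natAbs) • t) t := by
    intro p
    rcases le_or_gt 0 p with hp | hp
    · have e : (h:G)^p = h^(p.natAbs) := by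
        rw [← zpow_natCast, Int.natAbs_of_nonneg hp]
      rw [e]
    · have hneg : p = -((p.natAbs : ℤ)) := by omega
      have e1 : (h:G)^((p.natAbs : ℤ)) • (h^p • t) = t := by
        rw [smul_smul, ← zpow_add, hneg]; simp
      calc dist (h^p • t) t
          = dist (h^((p.natAbs : ℤ)) • (h^p • t)) (h^((p.natAbs : ℤ)) • t) :=
            (dist_smul_eq hiso _ _ _).symm
        _ = dist t (h^((p.natAbs : ℤ)) • t) := by rw [e1]
        _ = dist (h^(p.natAbs) • t) t := by rw [dist_comm, zpow_natCast]
  have e1 : (h:G)^(-n) • (h^m • t) = h^(m-n) • t := by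
    rw [smul_smul, ← zpow_add, neg_add_eq_sub]
  have e2 : (h:G)^(-n) • (h^n • t) = t := by
    rw [smul_smul, ← zpow_add]; simp
  calc dist (h^m • t) (h^n • t)
      = dist (h^(-n) • (h^m • t)) (h^(-n) • (h^n • t)) := (dist_smul_eq hiso _ _ _).symm
    _ = dist (h^(m-n) • t) t := by rw [e1, e2]
    _ = dist (h^((m-n).natAbs) • t) t := key _

end chain

/-- Let `G` act by isometries on a `δ`-hyperbolic metric space `S`, let `g ∈ G`
be loxodromic, `s ∈ S`, and let `f ∈ G` be such that for some `C ≥ 0` one has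
`(f gⁿ s, gⁿ s)_s ≤ C` and `(f g⁻ⁿ s, g⁻ⁿ s)_s ≤ C` for all `n ∈ ℕ`. Then
there is `N ∈ ℕ` such that the commutator `[f, gⁿ] = f gⁿ f⁻¹ g⁻ⁿ` is
loxodromic for all `n ≥ N`. -/
theorem commutator_loxodromic {G S : Type*} [Group G] [MetricSpace S]
    [MulAction G S]
    (hiso : ∀ g : G, Isometry (fun x : S => g • x))
    (δ : ℝ) (hδ : 0 ≤ δ)
    (hhyp : ∀ x y z t : S,
      min (gromovProd x y t) (gromovProd y z t) - δ ≤ gromovProd x z t)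
    (g : G) (hg : Loxodromic S g) (s : S) (f : G) (C : ℝ) (hC : 0 ≤ C)
    (h1 : ∀ n : ℕ, gromovProd ((f * g ^ n) • s) (g ^ n • s) s ≤ C)
    (h2 : ∀ n : ℕ, gromovProd ((f * (g ^ n)⁻¹) • s) ((g ^ n)⁻¹ • s) s ≤ C) :
    ∃ N : ℕ, ∀ n : ℕ, N ≤ n → Loxodromic S (f * g ^ n * f⁻¹ * (g ^ n)⁻¹) := by
  classical
  obtain ⟨lam, c, hlam, hc, hbd⟩ := hg s
  have hlam0 : (0:ℝ) < lam := lt_of_lt_of_le one_pos hlam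
  set D : ℝ := dist s (f • s) with hDdef
  have hD0 : 0 ≤ D := dist_nonneg
  set B : ℝ := 2*C + 2*D + 3*δ + 1 with hBdef
  refine ⟨⌈lam * (B + c)⌉₊, ?_⟩
  intro n hn
  -- the basic translation length bound
  set T : ℝ := dist s (g^n • s) with hTdef
  have hT : B ≤ T := by
    have h0 := (hbd (n:ℤ) 0).1
    rw [zpow_natCast, zpow_zero, one_smul] at h0
    have habs : |((n:ℤ):ℝ) - ((0:ℤ):ℝ)| = (n:ℝ) := by
      push_cast; rw [sub_zero, abs_of_nonneg (Nat.cast_nonneg n)]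
    rw [habs] at h0
    have hceil : lam * (B + c) ≤ (n : ℝ) := by
      have h1' : (⌈lam * (B + c)⌉₊ : ℝ) ≤ (n:ℝ) := by exact_mod_cast hn
      exact le_trans (Nat.le_ceil _) h1'
    have hinv : B + c ≤ lam⁻¹ * (n:ℝ) := by
      have := mul_le_mul_of_nonneg_left hceil (le_of_lt (inv_pos.2 hlam0))
      rwa [← mul_assoc, inv_mul_cancel₀ (ne_of_gt hlam0), one_mul] at this
    have : B ≤ dist (g^n • s) s := by linarith
    rwa [dist_comm] at this
  have hB1 : (1:ℝ) ≤ B := by rw [hBdef]; linarith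
  -- notation
  set xp : S := g^n • s with hxp
  set xm : S := (g^n)⁻¹ • s with hxm
  have hdxm : dist s xm = T := by
    have e := dist_smul_eq hiso (g^n) s xm
    rw [hxm, smul_inv_smul] at e
    rw [hxm, ← e, dist_comm]
  have h1' : gromovProd (f • xp) xp s ≤ C := by
    have := h1 n; rwa [mul_smul] at this
  have h2' : gromovProd (f • xm) xm s ≤ C := by
    have := h2 n; rwa [mul_smul] at this
  have hfD : dist (f⁻¹ • s) s = D := by
    have e := dist_smul_eq hiso f (f⁻¹ • s) s
    rw [smul_inv_smul] at e
    exact e.symm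
  -- the point v = f⁻¹ • xm
  set v : S := f⁻¹ • xm with hv
  have ha : gromovProd v xm s ≤ C + D := by
    have e := gp_smul hiso f v xm s
    rw [hv, smul_inv_smul] at e
    have e2 := gp_base xm (f • xm) (f • s) s
    have e3 : gromovProd xm (f • xm) s = gromovProd (f • xm) xm s :=
      gp_comm _ _ _
    rw [hv, ← e]
    rw [e3] at e2
    linarith
  have hb : T - D ≤ dist v s := by
    have e := dist_smul_eq hiso f v s
    rw [hv, smul_inv_smul] at e
    have tri := dist_triangle s (f • s) xm
    have := dist_comm (f • s) xm
    rw [hv]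
    linarith [hdxm, e.symm.le, e.ge]
  -- v' = gⁿ • v
  set v' : S := g^n • v with hv'
  have ec : gromovProd v' xp s = T - gromovProd v xm s := by
    have e1 := gp_smul hiso (g^n) v s xm
    have e4 : (g:G)^n • xm = s := by rw [hxm, smul_inv_smul]
    rw [e4] at e1
    have e2 := gp_add v s xm
    rw [hv', hxp, e1]
    linarith [hdxm]
  have hcv : T - (C + D) ≤ gromovProd v' xp s := by rw [ec]; linarith
  have hd2 : 2*T - 3*D - 2*C ≤ dist v' s := by
    have e : dist v' s = dist v xm := by
      have e1 := dist_smul_eq hiso (g^n) v xm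
      have e4 : (g:G)^n • xm = s := by rw [hxm, smul_inv_smul]
      rw [e4] at e1
      rw [hv', e1]
    have e2 := dist_eq_gp v xm s
    have e3 := dist_comm xm s
    rw [e]
    linarith [hdxm, ha, hb]
  -- hs = f • v'
  have ehs : (f * g^n * f⁻¹ * (g^n)⁻¹) • s = f • v' := by
    rw [hv', hv, hxm]; simp only [mul_smul]
  have he : gromovProd v' xp s - D ≤ gromovProd (f • v') (f • xp) s := by
    have e := gp_smul hiso f v' xp (f⁻¹ • s)
    rw [smul_inv_smul] at e
    have e2 := gp_base v' xp s (f⁻¹ • s)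
    rw [e]
    linarith [hfD]
  have hfvbound : T - C - 2*D ≤ gromovProd (f • v') (f • xp) s := by
    linarith [he, hcv]
  have hf1 : 2*T - 4*D - 2*C ≤ dist s ((f * g^n * f⁻¹ * (g^n)⁻¹) • s) := by
    rw [ehs]
    have e := dist_smul_eq hiso f (f⁻¹ • s) v'
    rw [smul_inv_smul] at e
    have tri := dist_triangle s (f⁻¹ • s) v'
    rw [dist_comm s (f⁻¹ • s)] at tri
    have := dist_comm v' s
    linarith [hfD, e.le, e.ge, hd2]
  -- (g): gromovProd (h • s) xp s ≤ C + δ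
  have hg' : gromovProd ((f * g^n * f⁻¹ * (g^n)⁻¹) • s) xp s ≤ C + δ := by
    rw [ehs]
    have hmin := hhyp (f • xp) (f • v') xp s
    have e : gromovProd (f • xp) (f • v') s = gromovProd (f • v') (f • xp) s :=
      gp_comm _ _ _
    rw [e] at hmin
    have hbig1 : C + δ < gromovProd (f • v') (f • xp) s := by linarith [hfvbound, hT]
    have hmin2 : min (gromovProd (f • v') (f • xp) s) (gromovProd (f • v') xp s)
        ≤ C + δ := by linarith [h1']
    rcases min_le_iff.mp hmin2 with h' | h'
    · exact absurd h' (not_le.2 hbig1)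
    · exact h'
  -- the inverse direction: u' = (gⁿ)⁻¹ • (f⁻¹ • s), u'' = f • u'
  set u' : S := (g^n)⁻¹ • (f⁻¹ • s) with hu'
  have hu'1 : T - D ≤ gromovProd u' xm s := by
    have e1 := gp_smul hiso (g^n) u' xm s
    have e4 : (g:G)^n • u' = f⁻¹ • s := by rw [hu', smul_inv_smul]
    have e5 : (g:G)^n • xm = s := by rw [hxm, smul_inv_smul]
    rw [e4, e5, ← hxp] at e1
    have e2 := gp_add (f⁻¹ • s) s xp
    have e3 : gromovProd (f⁻¹ • s) xp s ≤ dist (f⁻¹ • s) s := gp_le_dist _ _ _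
    have e6 : dist s xp = T := by rw [hxp]
    rw [← e1]
    linarith [hfD]
  have hu''1 : T - 2*D ≤ gromovProd (f • u') (f • xm) s := by
    have e := gp_smul hiso f u' xm (f⁻¹ • s)
    rw [smul_inv_smul] at e
    have e2 := gp_base u' xm s (f⁻¹ • s)
    rw [e]
    linarith [hfD, hu'1]
  have hu''2 : gromovProd (f • u') xm s ≤ C + δ := by
    have hmin := hhyp (f • xm) (f • u') xm s
    have e : gromovProd (f • xm) (f • u') s = gromovProd (f • u') (f • xm) s :=
      gp_comm _ _ _
    rw [e] at hmin
    have hbig1 : C + δ < gromovProd (f • u') (f • xm) s := by linarith [hu''1, hT]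
    have hmin2 : min (gromovProd (f • u') (f • xm) s) (gromovProd (f • u') xm s)
        ≤ C + δ := by linarith [h2']
    rcases min_le_iff.mp hmin2 with h' | h'
    · exact absurd h' (not_le.2 hbig1)
    · exact h'
  have ehsinv : (f * g^n * f⁻¹ * (g^n)⁻¹)⁻¹ • s = g^n • (f • u') := by
    rw [hu']; simp only [mul_inv_rev, inv_inv, mul_smul]
  have hinvb : T - (C + δ) ≤
      gromovProd ((f * g^n * f⁻¹ * (g^n)⁻¹)⁻¹ • s) xp s := by
    rw [ehsinv]
    have e1 := gp_smul hiso (g^n) (f • u') s xm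
    have e5 : (g:G)^n • xm = s := by rw [hxm, smul_inv_smul]
    rw [e5, ← hxp] at e1
    have e2 := gp_add (f • u') s xm
    rw [e1]
    linarith [hdxm, hu''2]
  -- (j): final product bound
  have hKfin : gromovProd ((f * g^n * f⁻¹ * (g^n)⁻¹)⁻¹ • s)
      ((f * g^n * f⁻¹ * (g^n)⁻¹) • s) s ≤ C + 2*δ := by
    have hmin := hhyp ((f * g^n * f⁻¹ * (g^n)⁻¹) • s)
      ((f * g^n * f⁻¹ * (g^n)⁻¹)⁻¹ • s) xp s
    have hbig1 : C + 2*δ < gromovProd ((f * g^n * f⁻¹ * (g^n)⁻¹)⁻¹ • s) xp s := by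
      linarith [hinvb, hT]
    have hmin2 : min
        (gromovProd ((f * g^n * f⁻¹ * (g^n)⁻¹) • s) ((f * g^n * f⁻¹ * (g^n)⁻¹)⁻¹ • s) s)
        (gromovProd ((f * g^n * f⁻¹ * (g^n)⁻¹)⁻¹ • s) xp s) ≤ C + 2*δ := by
      linarith [hg']
    rcases min_le_iff.mp hmin2 with h' | h'
    · rw [gp_comm]; exact h'
    · exact absurd h' (not_le.2 hbig1)
  -- apply the chain lemma
  set h : G := f * g^n * f⁻¹ * (g^n)⁻¹ with hh
  have hbigL : 2*(C + 2*δ) + 2*δ + 1 ≤ dist s (h • s) := by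
    have : 2*B - 4*D - 2*C ≤ dist s (h • s) := by
      rw [hh]; linarith [hf1, hT]
    rw [hBdef] at this
    linarith
  have hchain := chain_lemma hiso hδ hhyp h s (C + 2*δ) (by linarith) hKfin hbigL
  have hlow : ∀ k : ℕ, (k : ℝ) ≤ dist s (h^k • s) := fun k => (hchain k).2
  -- conclude loxodromicity
  intro t
  refine ⟨max 1 (dist (h • t) t), 2 * dist s t, le_max_left _ _, by positivity, ?_⟩
  intro m m'
  have habs : (((m - m').natAbs : ℕ) : ℝ) = |(m : ℝ) - (m' : ℝ)| := by
    rw [Nat.cast_natAbs]; push_cast; ring_nf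
  constructor
  · -- lower bound
    have hred := dist_zpow_reduce hiso h s m m'
    have hlow2 : |(m:ℝ) - (m':ℝ)| ≤ dist (h^m • s) (h^m' • s) := by
      rw [hred, ← habs, dist_comm]
      exact hlow _
    have t1 := dist_triangle (h^m • s) (h^m • t) (h^m' • s)
    have t2 := dist_triangle (h^m • t) (h^m' • t) (h^m' • s)
    have e1 : dist (h^m • s) (h^m • t) = dist s t := dist_smul_eq hiso _ _ _
    have e2 : dist (h^m' • t) (h^m' • s) = dist t s := dist_smul_eq hiso _ _ _
    have hml : (max 1 (dist (h • t) t))⁻¹ * |(m:ℝ) - (m':ℝ)| ≤ |(m:ℝ) - (m':ℝ)| := by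
      apply mul_le_of_le_one_left (abs_nonneg _)
      exact inv_le_one_of_one_le₀ (le_max_left _ _)
    have := dist_comm t s
    linarith
  · -- upper bound
    have hred := dist_zpow_reduce hiso h t m m'
    rw [hred]
    have hup := dist_pow_le hiso h t ((m - m').natAbs)
    have e1 : ((((m - m').natAbs : ℕ)) : ℝ) * dist (h • t) t ≤
        max 1 (dist (h • t) t) * |(m:ℝ) - (m':ℝ)| := by
      rw [habs, mul_comm]
      apply mul_le_mul_of_nonneg_right (le_max_right _ _) (abs_nonneg _)
    have hst : 0 ≤ 2 * dist s t := by positivity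
    linarith
end
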